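/- arXiv:cs/0702113 — 2 statements merged into one kernel-verified Lean document; each statement's English description precedes it below -/
import Mathlib

section
/- Let G = (V, E) be a finite connected undirected simple graph, let v be a cut vertex of G with degree d(v), and let φ_1, …, φ_b be any binary circulations of G. Form the b × d(v) matrix M^{[v]} over Z/2 whose rows are indexed by 1, …, b, whose columns are indexed by the edges of δ(v), and whose (i, e) entry is 1 if e ∈ φ_i and 0 otherwise. Then rank(M^{[v]}) ≤ d(v) − 2. -/
open scoped Classical symmDiff

noncomputable section

variable {V : Type*}

/-- The induced edge cut `δ(S)`: the edges of `G` with exactly one endpoint in `S`. -/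
def edgeCut [Fintype V] (G : SimpleGraph V) (S : Set V) : Finset (Sym2 V) :=
  G.edgeFinset.filter fun e => ∀ u v : V, e = s(u, v) → (u ∈ S ↔ v ∉ S)

/-- `φ` is a binary circulation of `G`: a set of edges of `G` in which every vertex
has even degree. -/
def IsCirculation [Fintype V] (G : SimpleGraph V) (φ : Finset (Sym2 V)) : Prop :=
  ↑φ ⊆ G.edgeSet ∧ ∀ v : V, Even ((φ.filter fun e => v ∈ e).card)

/-- The characteristic vector of an edge set, as an element of `(ZMod 2)^E`. -/
def chi [Fintype V] (G : SimpleGraph V) (F : Finset (Sym2 V)) : G.edgeSet → ZMod 2 :=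
  fun e => if ↑e ∈ F then 1 else 0

/-- `e` is a cut edge of `G`: removing it disconnects `G`. -/
def IsCutEdge (G : SimpleGraph V) (e : Sym2 V) : Prop :=
  e ∈ G.edgeSet ∧ ¬(G.deleteEdges {e}).Connected

/-- `{e, f}` is a cut pair of `G`: two distinct edges, neither a cut edge, whose
joint removal disconnects `G`. -/
def IsCutPair (G : SimpleGraph V) (e f : Sym2 V) : Prop :=
  e ≠ f ∧ e ∈ G.edgeSet ∧ f ∈ G.edgeSet ∧ ¬IsCutEdge G e ∧ ¬IsCutEdge G f ∧
    ¬(G.deleteEdges {e, f}).Connected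

/-- `v` is a cut vertex of `G`: deleting `v` and its incident edges disconnects `G`. -/
def IsCutVertex (G : SimpleGraph V) (v : V) : Prop :=
  ¬(G.induce {u | u ≠ v}).Connected

/-- `T` is a spanning tree of `G`. -/
def IsSpanningTree (G T : SimpleGraph V) : Prop := T ≤ G ∧ T.IsTree

/-- `K` is a cut class of `G`: an inclusion-maximal set of more than one edge,
every two of which form a cut pair. -/
def IsCutClass (G : SimpleGraph V) (K : Finset (Sym2 V)) : Prop :=
  1 < K.card ∧ (∀ e ∈ K, ∀ f ∈ K, e ≠ f → IsCutPair G e f) ∧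
    ∀ K' : Finset (Sym2 V), K ⊆ K' →
      (1 < K'.card ∧ ∀ e ∈ K', ∀ f ∈ K', e ≠ f → IsCutPair G e f) → K' = K

/-!
Deleting the cut vertex `v` leaves two distinct components `K₁`, `K₂`. Every edge leaving `Kᵢ`
ends at `v`, so the cut `δ(Kᵢ)` lies inside `δ(v)`; as a binary circulation meets every cut in an
even number of edges, the indicator vectors of `δ(K₁)` and `δ(K₂)` in `(ZMod 2)^δ(v)` lie in the
kernel of `M^[v]`. By connectivity each `Kᵢ` is joined to `v` by an edge, and these two edges show
that the two indicator vectors are linearly independent, so `M^[v]` has nullity at least 2.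
-/

namespace Matrix

theorem rank_le_card_sub_two_of_mulVec_eq_zero {K m n : Type*} [Field K] [Fintype n]
    (M : Matrix m n K) {w₁ w₂ : n → K} (hw : LinearIndependent K ![w₁, w₂])
    (h₁ : M *ᵥ w₁ = 0) (h₂ : M *ᵥ w₂ = 0) : M.rank ≤ Fintype.card n - 2 := by
  have hker : Submodule.span K (Set.range ![w₁, w₂]) ≤ LinearMap.ker M.mulVecLin := by
    rw [Submodule.span_le]
    rintro _ ⟨i, rfl⟩
    fin_cases i <;> simpa
  have hspan : Module.finrank K (Submodule.span K (Set.range ![w₁, w₂])) = 2 :=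
    finrank_span_eq_card hw
  have hdim := LinearMap.finrank_range_add_finrank_ker M.mulVecLin
  rw [Module.finrank_fintype_fun_eq_card] at hdim
  have := Submodule.finrank_mono hker
  rw [Matrix.rank]
  omega

end Matrix

theorem linearIndependent_pair_of_apply {K n : Type*} [Field K] {w₁ w₂ : n → K} {i j : n}
    (hi₁ : w₁ i ≠ 0) (hi₂ : w₂ i = 0) (hj₁ : w₁ j = 0) (hj₂ : w₂ j ≠ 0) :
    LinearIndependent K ![w₁, w₂] := by
  refine LinearIndependent.pair_iff.mpr fun s t hst => ⟨?_, ?_⟩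
  · simpa [hi₁, hi₂] using congr_fun hst i
  · simpa [hj₁, hj₂] using congr_fun hst j

section

open Matrix SimpleGraph

variable [Fintype V] {G : SimpleGraph V} {S : Set V} {a b v : V}

theorem mk_mem_edgeCut_iff (h : G.Adj a b) : s(a, b) ∈ edgeCut G S ↔ (a ∈ S ↔ b ∉ S) := by
  simp only [edgeCut, Finset.mem_filter, mem_edgeFinset, mem_edgeSet, h, true_and]
  refine ⟨fun hab => hab a b rfl, fun hab u w huw => ?_⟩
  rcases Sym2.eq_iff.mp huw with ⟨rfl, rfl⟩ | ⟨rfl, rfl⟩ <;> tauto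

theorem ite_mem_edgeCut_eq_sum {e : Sym2 V} (he : e ∈ G.edgeSet) :
    (if e ∈ edgeCut G S then 1 else 0 : ZMod 2) =
      ∑ u ∈ Finset.univ.filter (· ∈ S), if u ∈ e then 1 else 0 := by
  induction e using Sym2.ind with
  | _ a b =>
    have hab : a ≠ b := G.ne_of_adj he
    have hsplit : ∀ u, (if u ∈ s(a, b) then (1 : ZMod 2) else 0) =
        (if a = u then 1 else 0) + (if b = u then 1 else 0) := by
      intro u
      by_cases hu : a = u <;> by_cases hu' : b = u <;> simp_all [eq_comm]
    simp only [hsplit, Finset.sum_add_distrib, Finset.sum_ite_eq, Finset.mem_filter,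
      Finset.mem_univ, true_and, mk_mem_edgeCut_iff he]
    by_cases ha : a ∈ S <;> by_cases hb : b ∈ S <;> simp [ha, hb, CharTwo.add_self_eq_zero]

theorem IsCirculation.even_card_inter_edgeCut {φ : Finset (Sym2 V)} (hφ : IsCirculation G φ)
    (S : Set V) : Even (φ ∩ edgeCut G S).card := by
  rw [← ZMod.natCast_eq_zero_iff_even, ← Finset.filter_mem_eq_inter, Finset.card_filter]
  push_cast
  calc ∑ e ∈ φ, (if e ∈ edgeCut G S then 1 else 0 : ZMod 2)
      = ∑ e ∈ φ, ∑ u ∈ Finset.univ.filter (· ∈ S), if u ∈ e then 1 else 0 :=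
        Finset.sum_congr rfl fun e he => ite_mem_edgeCut_eq_sum (hφ.1 he)
    _ = ∑ u ∈ Finset.univ.filter (· ∈ S), ((φ.filter (u ∈ ·)).card : ZMod 2) := by
        rw [Finset.sum_comm]
        simp only [Finset.card_filter, Nat.cast_sum, Nat.cast_ite, Nat.cast_one, Nat.cast_zero]
    _ = 0 := Finset.sum_eq_zero fun u _ => (ZMod.natCast_eq_zero_iff_even).mpr (hφ.2 u)

theorem mk_mem_edgeCut_iff_of_notMem (h : G.Adj v a) (hv : v ∉ S) :
    s(v, a) ∈ edgeCut G S ↔ a ∈ S := by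
  simp [mk_mem_edgeCut_iff h, hv]

theorem mk_mem_edgeCut_singleton (h : G.Adj v a) : s(v, a) ∈ edgeCut G {v} := by
  simp [mk_mem_edgeCut_iff h, h.ne']

theorem mulVec_indicator_edgeCut_eq_zero {ι : Type*} {D : Finset (Sym2 V)}
    {φ : ι → Finset (Sym2 V)} (hφ : ∀ i, IsCirculation G (φ i)) (hS : edgeCut G S ⊆ D) :
    (Matrix.of fun i (e : D) => if (e : Sym2 V) ∈ φ i then (1 : ZMod 2) else 0) *ᵥ
      (fun e : D => if (e : Sym2 V) ∈ edgeCut G S then 1 else 0) = 0 := by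
  funext i
  have hcross : D.filter (fun e => e ∈ φ i ∧ e ∈ edgeCut G S) = φ i ∩ edgeCut G S := by
    ext e
    simp only [Finset.mem_filter, Finset.mem_inter, and_iff_right_iff_imp]
    exact fun he => hS he.2
  simp only [Matrix.mulVec, dotProduct, Matrix.of_apply, ite_zero_mul_ite_zero, mul_one]
  rw [Finset.sum_coe_sort D (fun e => if e ∈ φ i ∧ e ∈ edgeCut G S then (1 : ZMod 2) else 0),
    Finset.sum_boole, hcross, Pi.zero_apply, ZMod.natCast_eq_zero_iff_even]
  exact (hφ i).even_card_inter_edgeCut S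

theorem linearIndependent_indicator_edgeCut {T : Set V} {p q : V} (hvp : G.Adj v p)
    (hvq : G.Adj v q) (hvS : v ∉ S) (hvT : v ∉ T) (hST : Disjoint S T) (hp : p ∈ S)
    (hq : q ∈ T) :
    LinearIndependent (ZMod 2)
      ![fun e : edgeCut G {v} => if (e : Sym2 V) ∈ edgeCut G S then (1 : ZMod 2) else 0,
        fun e : edgeCut G {v} => if (e : Sym2 V) ∈ edgeCut G T then (1 : ZMod 2) else 0] :=
  linearIndependent_pair_of_apply (i := ⟨s(v, p), mk_mem_edgeCut_singleton hvp⟩)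
    (j := ⟨s(v, q), mk_mem_edgeCut_singleton hvq⟩)
    (by simp [mk_mem_edgeCut_iff_of_notMem hvp hvS, hp])
    (by simp [mk_mem_edgeCut_iff_of_notMem hvp hvT, hST.notMem_of_mem_left hp])
    (by simp [mk_mem_edgeCut_iff_of_notMem hvq hvS, hST.notMem_of_mem_right hq])
    (by simp [mk_mem_edgeCut_iff_of_notMem hvq hvT, hq])

end

section

open SimpleGraph

variable {G : SimpleGraph V} {S : Set V} {v x : V}

theorem exists_adj_mem_of_adj_eq (hG : G.Connected)
    (hS : ∀ ⦃a c⦄, G.Adj a c → a ∈ S → c ∉ S → c = v) (hv : v ∉ S) (hx : x ∈ S) :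
    ∃ p ∈ S, G.Adj v p := by
  obtain ⟨w⟩ := hG.preconnected x v
  obtain ⟨d, -, hd₁, hd₂⟩ := w.exists_boundary_dart S hx hv
  exact ⟨d.fst, hd₁, hS d.adj hd₁ hd₂ ▸ d.adj.symm⟩

theorem edgeCut_subset_edgeCut_singleton [Fintype V]
    (hS : ∀ ⦃a c⦄, G.Adj a c → a ∈ S → c ∉ S → c = v) : edgeCut G S ⊆ edgeCut G {v} := by
  intro e he
  have hE : e ∈ G.edgeSet := mem_edgeFinset.mp (Finset.mem_filter.mp he).1
  induction e using Sym2.ind with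
  | _ a c =>
    rw [mk_mem_edgeCut_iff hE] at he ⊢
    by_cases ha : a ∈ S
    · have hc : c ∉ S := he.mp ha
      obtain rfl := hS hE ha hc
      simpa using ne_of_mem_of_not_mem ha hc
    · have hc : c ∈ S := by tauto
      obtain rfl := hS hE.symm hc ha
      simpa using ne_of_mem_of_not_mem hc ha

namespace SimpleGraph.ConnectedComponent

variable (K : (G.induce {u | u ≠ v}).ConnectedComponent)

theorem notMem_image_supp : v ∉ Subtype.val '' K.supp := fun ⟨u, _, hu⟩ => u.2 hu

theorem eq_of_adj_of_mem_image_supp ⦃a c : V⦄ (hac : G.Adj a c)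
    (ha : a ∈ Subtype.val '' K.supp) (hc : c ∉ Subtype.val '' K.supp) : c = v := by
  by_contra hcv
  obtain ⟨a, haK, rfl⟩ := ha
  refine hc ⟨⟨c, hcv⟩, ?_, rfl⟩
  rw [mem_supp_iff] at haK ⊢
  rw [← haK]
  exact connectedComponentMk_eq_of_adj (by simpa using hac.symm)

theorem exists_adj_mem_image_supp (hG : G.Connected) :
    ∃ p ∈ Subtype.val '' K.supp, G.Adj v p := by
  obtain ⟨x, hx⟩ := K.nonempty_supp
  exact exists_adj_mem_of_adj_eq hG K.eq_of_adj_of_mem_image_supp K.notMem_image_supp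
    ⟨x, hx, rfl⟩

theorem disjoint_image_supp {K' : (G.induce {u | u ≠ v}).ConnectedComponent}
    (hK : K ≠ K') : Disjoint (Subtype.val '' K.supp) (Subtype.val '' K'.supp) :=
  (Set.disjoint_image_iff Subtype.val_injective).mpr
    (pairwise_disjoint_supp_connectedComponent _ hK)

end SimpleGraph.ConnectedComponent

theorem exists_ne_connectedComponent_of_isCutVertex [Fintype V] (hV : 2 ≤ Fintype.card V)
    (hv : IsCutVertex G v) : ∃ K₁ K₂ : (G.induce {u | u ≠ v}).ConnectedComponent, K₁ ≠ K₂ := by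
  obtain ⟨u, hu⟩ := Fintype.exists_ne_of_one_lt_card hV v
  have : Nonempty {u | u ≠ v} := ⟨⟨u, hu⟩⟩
  have hpre : ¬(G.induce {u | u ≠ v}).Preconnected := fun h => hv ⟨h⟩
  simp only [Preconnected, not_forall] at hpre
  obtain ⟨x, y, hxy⟩ := hpre
  exact ⟨_, _, fun h => hxy (ConnectedComponent.eq.mp h)⟩

end

/-- If `v` is a cut vertex of a finite connected simple graph and
`φ_1, …, φ_b` are binary circulations, then the `b × d(v)` matrix over `ZMod 2` whose
`(i, e)` entry records whether `e ∈ φ_i` has rank at most `d(v) - 2`. -/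
theorem rank_le_of_cutVertex [Fintype V] (G : SimpleGraph V)
    (hG : G.Connected) (hV : 2 ≤ Fintype.card V)
    (v : V) (hv : IsCutVertex G v)
    (b : ℕ) (φ : Fin b → Finset (Sym2 V)) (hφ : ∀ i, IsCirculation G (φ i)) :
    Matrix.rank (Matrix.of fun (i : Fin b) (e : ↥(edgeCut G {v})) =>
        if (e : Sym2 V) ∈ φ i then (1 : ZMod 2) else 0)
      ≤ (edgeCut G {v}).card - 2 := by
  obtain ⟨K₁, K₂, hK⟩ := exists_ne_connectedComponent_of_isCutVertex hV hv
  obtain ⟨p, hp, hvp⟩ := K₁.exists_adj_mem_image_supp hG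
  obtain ⟨q, hq, hvq⟩ := K₂.exists_adj_mem_image_supp hG
  simpa using Matrix.rank_le_card_sub_two_of_mulVec_eq_zero _
    (linearIndependent_indicator_edgeCut hvp hvq K₁.notMem_image_supp K₂.notMem_image_supp
      (K₁.disjoint_image_supp hK) hp hq)
    (mulVec_indicator_edgeCut_eq_zero hφ
      (edgeCut_subset_edgeCut_singleton K₁.eq_of_adj_of_mem_image_supp))
    (mulVec_indicator_edgeCut_eq_zero hφ
      (edgeCut_subset_edgeCut_singleton K₂.eq_of_adj_of_mem_image_supp))
end
end

section
/- Let G = (V, E) be a finite connected undirected simple graph with n = |V| ≥ 2 vertices and m = |E| edges, let Z denote its cycle space, and let b be a natural number with 2^b ≥ n·m. Then the number of b-tuples (φ_1, …, φ_b) of binary circulations for which there exists an edge e that is not a cut edge yet satisfies e ∉ φ_i for all i = 1, …, b, is at most |Z|^b / n. Equivalently, if φ_1, …, φ_b are independent uniformly random elements of the cycle space, then with probability at least 1 − 1/n every edge e with e ∉ φ_i for all i is a cut edge. -/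
open scoped Classical symmDiff

noncomputable section

variable {V : Type*}

/-! The proof is a union bound. For a non-cut edge `e` there is a cycle `C` through `e`,
and `ψ ↦ ψ ∆ C` maps the circulations avoiding `e` injectively to those containing `e`;
so at most half of the cycle space avoids `e`, and the tuples in which all `b` coordinates
avoid a fixed `e` number at most `(|Z| / 2)^b`. Summing over the at most `m` edges gives
`m · |Z|^b / 2^b ≤ |Z|^b / n`. -/

open Finset

theorem Finset.card_symmDiff_add_two_mul_card_inter {α : Type*} [DecidableEq α]
    (s t : Finset α) : #(s ∆ t) + 2 * #(s ∩ t) = #s + #t := by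
  rw [symmDiff_def, sup_eq_union, card_union_of_disjoint disjoint_sdiff_sdiff]
  have hs := card_sdiff_add_card_inter s t
  have ht := card_sdiff_add_card_inter t s
  rw [inter_comm] at ht
  omega

theorem Finset.even_card_symmDiff {α : Type*} [DecidableEq α] {s t : Finset α}
    (hs : Even #s) (ht : Even #t) : Even #(s ∆ t) := by
  have h := card_symmDiff_add_two_mul_card_inter s t
  rw [Nat.even_iff] at *
  omega

theorem Set.ncard_setOf_exists_forall_mem_le {ι α β : Type*} [Fintype ι] (s : Finset β)
    (A : β → Finset α) {M : ℕ} (hA : ∀ e ∈ s, #(A e) ≤ M) :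
    {φ : ι → α | ∃ e ∈ s, ∀ i, φ i ∈ A e}.ncard ≤ #s * M ^ Fintype.card ι := by
  have hunion : {φ : ι → α | ∃ e ∈ s, ∀ i, φ i ∈ A e}
      = ↑(s.biUnion fun e => Fintype.piFinset fun _ : ι => A e) := by
    ext φ
    simp
  rw [hunion, Set.ncard_coe_finset]
  refine card_biUnion_le_card_mul _ _ _ fun e he => ?_
  rw [Fintype.card_piFinset, prod_const, card_univ]
  exact Nat.pow_le_pow_left (hA e he) _

section Circulation

variable [Fintype V] {G : SimpleGraph V}

theorem IsCirculation.symmDiff {φ ψ : Finset (Sym2 V)} (hφ : IsCirculation G φ)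
    (hψ : IsCirculation G ψ) : IsCirculation G (φ ∆ ψ) := by
  refine ⟨?_, fun v => ?_⟩
  · rw [Finset.coe_symmDiff]
    exact Set.symmDiff_subset_union.trans (Set.union_subset hφ.1 hψ.1)
  · have hfilter :
        (φ ∆ ψ).filter (v ∈ ·) = φ.filter (v ∈ ·) ∆ ψ.filter (v ∈ ·) := by
      ext e
      simp only [mem_filter, mem_symmDiff]
      tauto
    rw [hfilter]
    exact Finset.even_card_symmDiff (hφ.2 v) (hψ.2 v)

theorem SimpleGraph.Walk.IsTrail.isCirculation_edgesFinset {u : V} {p : G.Walk u u}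
    (hp : p.IsTrail) : IsCirculation G hp.edgesFinset := by
  refine ⟨fun e he => p.edges_subset_edgeSet he, fun v => ?_⟩
  have hcard : #(hp.edgesFinset.filter (v ∈ ·)) = p.edges.countP (v ∈ ·) := by
    simp [Finset.card, Finset.filter_val, List.countP_eq_length_filter]
  rw [hcard, hp.even_countP_edges_iff v]
  exact fun h => absurd rfl h

theorem exists_isCirculation_mem_of_not_isCutEdge {e : Sym2 V} (he : e ∈ G.edgeSet)
    (hne : ¬IsCutEdge G e) : ∃ C, IsCirculation G C ∧ e ∈ C := by
  have hconn : (G.deleteEdges {e}).Connected := not_not.mp fun h => hne ⟨he, h⟩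
  have hbridge : ¬G.IsBridge e := by
    induction e using Sym2.ind with
    | _ x y => exact not_not.mpr (hconn.preconnected x y)
  rw [SimpleGraph.isBridge_iff_forall_cycle_notMem he] at hbridge
  push Not at hbridge
  obtain ⟨u, p, hp, hep⟩ := hbridge
  exact ⟨hp.isTrail.edgesFinset, hp.isTrail.isCirculation_edgesFinset, hep⟩

def cycleSpace (G : SimpleGraph V) : Finset (Finset (Sym2 V)) :=
  univ.filter (IsCirculation G)

theorem ncard_setOf_isCirculation (G : SimpleGraph V) :
    {ψ | IsCirculation G ψ}.ncard = #(cycleSpace G) := by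
  rw [cycleSpace, Set.ncard_eq_toFinset_card', Set.toFinset_ofPred]

theorem two_mul_card_filter_notMem_cycleSpace_le {e : Sym2 V} (he : e ∈ G.edgeSet)
    (hne : ¬IsCutEdge G e) : 2 * #((cycleSpace G).filter (e ∉ ·)) ≤ #(cycleSpace G) := by
  obtain ⟨C, hC, heC⟩ := exists_isCirculation_mem_of_not_isCutEdge he hne
  have hle : #((cycleSpace G).filter (e ∉ ·)) ≤ #((cycleSpace G).filter (e ∈ ·)) := by
    refine card_le_card_of_injOn (· ∆ C) (fun ψ hψ => ?_) (symmDiff_left_injective C).injOn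
    simp only [cycleSpace, coe_filter, mem_filter, mem_univ, true_and,
      Set.mem_ofPred_eq] at hψ ⊢
    exact ⟨hψ.1.symmDiff hC, mem_symmDiff.mpr (Or.inr ⟨heC, hψ.2⟩)⟩
  have hsplit := card_filter_add_card_filter_not (s := cycleSpace G) (e ∈ ·)
  omega

theorem ncard_tuples_avoiding_nonCutEdge_le (G : SimpleGraph V) (b : ℕ) :
    {φ : Fin b → Finset (Sym2 V) | (∀ i, IsCirculation G (φ i)) ∧
        ∃ e ∈ G.edgeSet, ¬IsCutEdge G e ∧ ∀ i, e ∉ φ i}.ncard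
      ≤ Fintype.card G.edgeSet * (#(cycleSpace G) / 2) ^ b := by
  set nonCutEdges := G.edgeFinset.filter (¬IsCutEdge G ·)
  set avoiding : Sym2 V → Finset (Finset (Sym2 V)) := fun e => (cycleSpace G).filter (e ∉ ·)
  have hhalf : ∀ e ∈ nonCutEdges, #(avoiding e) ≤ #(cycleSpace G) / 2 := by
    intro e he
    rw [mem_filter, SimpleGraph.mem_edgeFinset] at he
    have := two_mul_card_filter_notMem_cycleSpace_le he.1 he.2
    show #((cycleSpace G).filter (e ∉ ·)) ≤ _
    omega
  calc _ ≤ {φ : Fin b → _ | ∃ e ∈ nonCutEdges, ∀ i, φ i ∈ avoiding e}.ncard := by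
        refine Set.ncard_le_ncard ?_ (Set.toFinite _)
        rintro φ ⟨hφ, e, he, hne, havoid⟩
        refine ⟨e, by simpa [nonCutEdges] using ⟨he, hne⟩, fun i => ?_⟩
        simpa [avoiding, cycleSpace] using ⟨hφ i, havoid i⟩
    _ ≤ #nonCutEdges * (#(cycleSpace G) / 2) ^ b := by
        simpa using Set.ncard_setOf_exists_forall_mem_le (ι := Fin b) nonCutEdges _ hhalf
    _ ≤ Fintype.card G.edgeSet * (#(cycleSpace G) / 2) ^ b := by
        rw [← SimpleGraph.edgeFinset_card]
        gcongr
        exact filter_subset _ _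

end Circulation

theorem count_bad_tuples_cutEdges_general [Fintype V] (G : SimpleGraph V) (b : ℕ)
    (hb : Fintype.card V * Fintype.card G.edgeSet ≤ 2 ^ b) :
    Fintype.card V *
        Set.ncard {φ : Fin b → Finset (Sym2 V) |
          (∀ i, IsCirculation G (φ i)) ∧
            ∃ e ∈ G.edgeSet, ¬IsCutEdge G e ∧ ∀ i, e ∉ φ i}
      ≤ (Set.ncard {ψ : Finset (Sym2 V) | IsCirculation G ψ}) ^ b := by
  rw [ncard_setOf_isCirculation]
  calc _ ≤ Fintype.card V * (Fintype.card G.edgeSet * (#(cycleSpace G) / 2) ^ b) := by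
        gcongr
        exact ncard_tuples_avoiding_nonCutEdge_le G b
    _ ≤ 2 ^ b * (#(cycleSpace G) / 2) ^ b := by
        rw [← mul_assoc]
        gcongr
    _ ≤ #(cycleSpace G) ^ b := by
        rw [← mul_pow]
        gcongr
        exact Nat.mul_div_le _ _

/-- Let `G` have `n ≥ 2` vertices and `m` edges, and let `2^b ≥ n·m`.
Then the number of `b`-tuples of binary circulations for which some non-cut edge `e`
avoids every `φ_i` is at most `|Z|^b / n`, where `Z` is the cycle space (stated in the
equivalent product form `n · #bad ≤ |Z|^b`). -/
theorem count_bad_tuples_cutEdges [Fintype V] (G : SimpleGraph V) (hG : G.Connected)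
    (hn : 2 ≤ Fintype.card V) (b : ℕ)
    (hb : Fintype.card V * Fintype.card G.edgeSet ≤ 2 ^ b) :
    Fintype.card V *
        Set.ncard {φ : Fin b → Finset (Sym2 V) |
          (∀ i, IsCirculation G (φ i)) ∧
            ∃ e ∈ G.edgeSet, ¬IsCutEdge G e ∧ ∀ i, e ∉ φ i}
      ≤ (Set.ncard {ψ : Finset (Sym2 V) | IsCirculation G ψ}) ^ b :=
  count_bad_tuples_cutEdges_general G b hb
end
end
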